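/- Let R be a ring and n ≥ 1 an integer. R is a CN ring if and only if V_n(R) is a CN ring, where V_n(R) is the subring of M_n(R) consisting of all upper triangular Toeplitz matrices, i.e. upper triangular matrices whose (i,j)-entry depends only on the difference j - i; the CN-decomposition in V_n(R) is taken with respect to the center of V_n(R) and nilpotent elements of V_n(R). -/

import Mathlib

/-- An element of a ring has a *CN-decomposition* if it is a sum of a central
element and a nilpotent element. -/
def HasCNDecomp {R : Type*} [Ring R] (a : R) : Prop :=
  ∃ c n : R, c ∈ Set.center R ∧ IsNilpotent n ∧ a = c + n

/-- A ring is a *CN ring* if every element has a CN-decomposition. -/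
def IsCNRing (R : Type*) [Ring R] : Prop := ∀ a : R, HasCNDecomp a

/-- `Vₙ(R)`: the subring of `Mₙ(R)` of upper triangular Toeplitz matrices,
i.e. upper triangular matrices whose `(i, j)` entry depends only on `j - i`. -/
def Vn (R : Type*) [Ring R] (n : ℕ) : Subring (Matrix (Fin n) (Fin n) R) where
  carrier := {A | (∀ i j : Fin n, (j : ℕ) < (i : ℕ) → A i j = 0) ∧
    ∀ i j k l : Fin n, (i : ℕ) + (l : ℕ) = (k : ℕ) + (j : ℕ) → A i j = A k l}
  zero_mem' := ⟨fun _ _ _ => rfl, fun _ _ _ _ _ => rfl⟩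
  one_mem' := by
    constructor
    · intro i j h
      exact Matrix.one_apply_ne (fun hij => by omega)
    · intro p q r s hsum
      by_cases hpq : p = q
      · have hrs : r = s := by subst hpq; exact Fin.ext (by omega)
        subst hpq; subst hrs
        rw [Matrix.one_apply_eq, Matrix.one_apply_eq]
      · have hpq' : (p : ℕ) ≠ (q : ℕ) := fun h => hpq (Fin.ext h)
        have hrs : r ≠ s := fun h => hpq' (by omega)
        rw [Matrix.one_apply_ne hpq, Matrix.one_apply_ne hrs]
  add_mem' := by
    rintro A B ⟨hA1, hA2⟩ ⟨hB1, hB2⟩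
    exact ⟨fun i j h => by simp [Matrix.add_apply, hA1 i j h, hB1 i j h],
      fun p q r s hsum => by simp [Matrix.add_apply, hA2 p q r s hsum, hB2 p q r s hsum]⟩
  neg_mem' := by
    rintro A ⟨hA1, hA2⟩
    exact ⟨fun i j h => by simp [Matrix.neg_apply, hA1 i j h],
      fun p q r s hsum => by simp [Matrix.neg_apply, hA2 p q r s hsum]⟩
  mul_mem' := by
    rintro A B ⟨hA1, hA2⟩ ⟨hB1, hB2⟩
    have hUT : ∀ i j : Fin n, (j : ℕ) < (i : ℕ) → (A * B) i j = 0 := by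
      intro i j h
      rw [Matrix.mul_apply]
      apply Finset.sum_eq_zero
      intro m _
      rcases lt_or_ge (m : ℕ) (i : ℕ) with hm | hm
      · rw [hA1 i m hm, zero_mul]
      · rw [hB1 m j (by omega), mul_zero]
    refine ⟨hUT, ?_⟩
    have expand : ∀ p q : Fin n, (A * B) p q = ∑ m ∈ Finset.Icc p q, A p m * B m q := by
      intro p q
      rw [Matrix.mul_apply]
      refine (Finset.sum_subset (Finset.subset_univ _) ?_).symm
      intro m _ hm
      rw [Finset.mem_Icc, not_and_or] at hm
      rcases hm with hm | hm
      · rw [hA1 p m (by rw [Fin.le_def] at hm; omega), zero_mul]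
      · rw [hB1 m q (by rw [Fin.le_def] at hm; omega), mul_zero]
    intro p q r s hsum
    rcases lt_or_ge (q : ℕ) (p : ℕ) with hpq | hpq
    · rw [hUT p q hpq, hUT r s (by omega)]
    · rw [expand p q, expand r s]
      have hs : (s : ℕ) < n := s.isLt
      refine Finset.sum_bij'
        (fun m hm => (⟨(m : ℕ) + (r : ℕ) - (p : ℕ), by
          have h1 := (Finset.mem_Icc.mp hm).1
          have h2 := (Finset.mem_Icc.mp hm).2
          rw [Fin.le_def] at h1 h2; omega⟩ : Fin n))
        (fun m hm => (⟨(m : ℕ) + (p : ℕ) - (r : ℕ), by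
          have h1 := (Finset.mem_Icc.mp hm).1
          have h2 := (Finset.mem_Icc.mp hm).2
          rw [Fin.le_def] at h1 h2
          have hq : (q : ℕ) < n := q.isLt; omega⟩ : Fin n))
        ?_ ?_ ?_ ?_ ?_
      · intro m hm
        have h1 := (Finset.mem_Icc.mp hm).1
        have h2 := (Finset.mem_Icc.mp hm).2
        rw [Fin.le_def] at h1 h2
        simp only [Finset.mem_Icc, Fin.le_def]
        constructor <;> (try simp) <;> omega
      · intro m hm
        have h1 := (Finset.mem_Icc.mp hm).1
        have h2 := (Finset.mem_Icc.mp hm).2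
        rw [Fin.le_def] at h1 h2
        simp only [Finset.mem_Icc, Fin.le_def]
        constructor <;> (try simp) <;> omega
      · intro m hm
        have h1 := (Finset.mem_Icc.mp hm).1
        rw [Fin.le_def] at h1
        exact Fin.ext (by simp; omega)
      · intro m hm
        have h1 := (Finset.mem_Icc.mp hm).1
        rw [Fin.le_def] at h1
        exact Fin.ext (by simp; omega)
      · intro m hm
        have h1 := (Finset.mem_Icc.mp hm).1
        have h2 := (Finset.mem_Icc.mp hm).2
        rw [Fin.le_def] at h1 h2
        have e1 : A p m = A r ⟨(m : ℕ) + (r : ℕ) - (p : ℕ), by omega⟩ :=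
          hA2 p m r _ (by simp; omega)
        have e2 : B m q = B ⟨(m : ℕ) + (r : ℕ) - (p : ℕ), by omega⟩ s :=
          hB2 m q _ s (by simp; omega)
        rw [e1, e2]

/-!
The `(i, i)` entry is a ring homomorphism `Vₙ(R) → R` (products of upper triangular matrices
multiply on the diagonal), split by the scalar matrices. Scalar matrices of central elements are
central, and a Toeplitz matrix with one zero diagonal entry is strictly upper triangular, hence
nilpotent. A CN-decomposition of `A 0 0` in `R` therefore lifts to one of `A` in `Vₙ(R)`, and a
CN-decomposition of a scalar matrix `r • 1` in `Vₙ(R)` maps to one of `r` in `R`.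
-/

theorem map_mem_center_of_surjective {M N F : Type*} [Semigroup M] [Semigroup N] [FunLike F M N]
    [MulHomClass F M N] (f : F) (hf : Function.Surjective f) {z : M} (hz : z ∈ Set.center M) :
    f z ∈ Set.center N := by
  rw [Semigroup.mem_center_iff] at hz ⊢
  intro y
  obtain ⟨x, rfl⟩ := hf y
  rw [← map_mul, ← map_mul, hz x]

theorem isNilpotent_of_isNilpotent_map {S R F : Type*} [MonoidWithZero S] [MonoidWithZero R]
    [FunLike F S R] [MonoidWithZeroHomClass F S R] (f : F)
    (hker : ∀ x, f x = 0 → IsNilpotent x) {x : S} (hx : IsNilpotent (f x)) : IsNilpotent x := by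
  obtain ⟨t, ht⟩ := hx
  obtain ⟨s, hs⟩ := hker (x ^ t) (by rw [map_pow, ht])
  exact ⟨t * s, by rw [pow_mul, hs]⟩

section CNRing

variable {S R : Type*} [Ring S] [Ring R]

theorem HasCNDecomp.map (f : S →+* R) (hf : Function.Surjective f) {a : S}
    (h : HasCNDecomp a) : HasCNDecomp (f a) := by
  obtain ⟨c, ν, hc, hν, rfl⟩ := h
  exact ⟨f c, f ν, map_mem_center_of_surjective f hf hc, hν.map f, map_add f c ν⟩

theorem IsCNRing.of_surjective (f : S →+* R) (hf : Function.Surjective f) (h : IsCNRing S) :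
    IsCNRing R := by
  intro r
  obtain ⟨a, rfl⟩ := hf r
  exact (h a).map f hf

theorem IsCNRing.of_leftInverse (f : S →+* R) (g : R → S) (hfg : Function.LeftInverse f g)
    (hg : ∀ c ∈ Set.center R, g c ∈ Set.center S) (hker : ∀ x, f x = 0 → IsNilpotent x)
    (h : IsCNRing R) : IsCNRing S := by
  intro a
  obtain ⟨c, ν, hc, hν, ha⟩ := h (f a)
  refine ⟨g c, a - g c, hg c hc, isNilpotent_of_isNilpotent_map f hker ?_, by abel⟩
  rwa [map_sub, hfg, ha, add_sub_cancel_left]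

end CNRing

namespace Matrix

theorem BlockTriangular.mul_apply_self {m R : Type*} [LinearOrder m] [Fintype m]
    [NonUnitalNonAssocSemiring R] {M N : Matrix m m R} (hM : M.BlockTriangular id)
    (hN : N.BlockTriangular id) (i : m) : (M * N) i i = M i i * N i i := by
  rw [mul_apply]
  refine Finset.sum_eq_single i (fun k _ hki => ?_) (fun hi => absurd (Finset.mem_univ i) hi)
  rcases hki.lt_or_gt with hlt | hgt
  · rw [hM hlt, zero_mul]
  · rw [hN hgt, mul_zero]

variable {R : Type*} [Semiring R] {n : ℕ}

theorem pow_apply_eq_zero_of_lt_add {M : Matrix (Fin n) (Fin n) R}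
    (hM : ∀ i j, j ≤ i → M i j = 0) (k : ℕ) (i j : Fin n) (hij : (j : ℕ) < i + k) :
    (M ^ k) i j = 0 := by
  induction k generalizing j with
  | zero => exact one_apply_ne (by rintro rfl; omega)
  | succ k ih =>
    rw [pow_succ, mul_apply]
    refine Finset.sum_eq_zero fun l _ => ?_
    rcases lt_or_ge (l : ℕ) (i + k) with hl | hl
    · rw [ih l hl, zero_mul]
    · rw [hM l j (by rw [Fin.le_def]; omega), mul_zero]

theorem isNilpotent_of_forall_le {M : Matrix (Fin n) (Fin n) R}
    (hM : ∀ i j, j ≤ i → M i j = 0) : IsNilpotent M :=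
  ⟨n, ext fun i j => pow_apply_eq_zero_of_lt_add hM n i j (by omega)⟩

end Matrix

namespace Vn

variable {R : Type*} [Ring R] {n : ℕ}

theorem blockTriangular (A : Vn R n) : (A : Matrix (Fin n) (Fin n) R).BlockTriangular id :=
  fun i j h => A.2.1 i j h

theorem apply_self_eq (A : Vn R n) (i j : Fin n) :
    (A : Matrix (Fin n) (Fin n) R) i i = (A : Matrix (Fin n) (Fin n) R) j j :=
  A.2.2 i i j j (Nat.add_comm _ _)

def diagEntry (i : Fin n) : Vn R n →+* R where
  toFun A := (A : Matrix (Fin n) (Fin n) R) i i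
  map_one' := Matrix.one_apply_eq i
  map_mul' A B := (blockTriangular A).mul_apply_self (blockTriangular B) i
  map_zero' := rfl
  map_add' _ _ := rfl

theorem scalar_mem (r : R) : Matrix.scalar (Fin n) r ∈ Vn R n := by
  refine ⟨fun i j h => Matrix.diagonal_apply_ne _ (by rintro rfl; omega), fun i j k l h => ?_⟩
  simp only [Matrix.scalar_apply, Matrix.diagonal_apply]
  split_ifs <;> simp_all [Fin.ext_iff] <;> omega

def scalar : R →+* Vn R n :=
  (Matrix.scalar (Fin n)).codRestrict (Vn R n) scalar_mem

theorem diagEntry_scalar (i : Fin n) (r : R) : diagEntry i (scalar r) = r :=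
  Matrix.diagonal_apply_eq _ i

theorem scalar_mem_center {c : R} (hc : c ∈ Set.center R) : scalar c ∈ Set.center (Vn R n) := by
  rw [Semigroup.mem_center_iff] at hc ⊢
  exact fun A => Subtype.ext
    (Matrix.scalar_commute c (fun r => (hc r).symm) (A : Matrix (Fin n) (Fin n) R)).eq.symm

theorem isNilpotent_of_diagEntry_eq_zero (i : Fin n) {A : Vn R n} (hA : diagEntry i A = 0) :
    IsNilpotent A := by
  refine (IsNilpotent.map_iff (Vn R n).subtype_injective).mp
    (Matrix.isNilpotent_of_forall_le fun j k hkj => ?_)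
  rcases hkj.lt_or_eq with hlt | rfl
  · exact blockTriangular A hlt
  · exact (apply_self_eq A k i).trans hA

end Vn

/-- For `n ≥ 1`, `R` is a CN ring iff `Vₙ(R)` is a CN ring. -/
theorem isCNRing_iff_Vn {R : Type*} [Ring R] (n : ℕ) (hn : 1 ≤ n) :
    IsCNRing R ↔ IsCNRing (Vn R n) := by
  let i : Fin n := ⟨0, hn⟩
  have hsplit : Function.LeftInverse (Vn.diagEntry i) (Vn.scalar (R := R)) := Vn.diagEntry_scalar i
  exact ⟨IsCNRing.of_leftInverse _ _ hsplit (fun _ => Vn.scalar_mem_center)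
      (fun _ => Vn.isNilpotent_of_diagEntry_eq_zero i),
    IsCNRing.of_surjective _ hsplit.surjective⟩
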